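/- arXiv:1105.2429 — 9 statements merged into one kernel-verified Lean document; each statement's English description precedes it below -/
import Mathlib

section
/- Let X be a complete metric space and T : X → X a continuous map. Suppose there are points x, y ∈ X and ε > 0 such that x ∈ J(w) for every w in the open ball B(y, ε). Then there exists a point z ∈ B(y, ε) such that x ∈ L(z), i.e., there is a strictly increasing sequence of positive integers (kₙ) with T^{kₙ} z → x. -/
open Filter Topology Set Metric

/-- The limit set `L(x)`: limits of subsequences `T^[kₙ] x` along a strictly
increasing sequence of positive integers. -/
def limitSet {X : Type*} [TopologicalSpace X] (T : X → X) (x : X) : Set X :=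
  {y | ∃ k : ℕ → ℕ, StrictMono k ∧ (∀ n, 0 < k n) ∧
    Tendsto (fun n => T^[k n] x) atTop (𝓝 y)}

/-- The extended (prolongational) limit set `J(x)`. -/
def extLimitSet {X : Type*} [TopologicalSpace X] (T : X → X) (x : X) : Set X :=
  {y | ∃ k : ℕ → ℕ, StrictMono k ∧ (∀ n, 0 < k n) ∧
    ∃ u : ℕ → X, Tendsto u atTop (𝓝 x) ∧
      Tendsto (fun n => T^[k n] (u n)) atTop (𝓝 y)}

/-- Topological transitivity. -/
def TopTransitive {X : Type*} [TopologicalSpace X] (T : X → X) : Prop :=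
  ∀ U V : Set X, IsOpen U → IsOpen V → U.Nonempty → V.Nonempty →
    ∃ n : ℕ, (T^[n] '' U ∩ V).Nonempty

/-!
The points `z` whose orbit accumulates at `x` form the Gδ set
`⋂ m N, ⋃ n ≥ N, T^[n] ⁻¹' ball x (1 / (m + 1))`. The hypothesis `x ∈ J(w)` implies
that `w` lies in the closure of each of these open sets, so each is dense in `B(y, ε)`,
and the Baire category theorem produces a point `z ∈ B(y, ε)` in all of them.
A cluster point of the orbit is then the limit of a subsequence.
-/

theorem IsOpen.inter_iInter_nonempty_of_subset_closure {X ι : Type*} [TopologicalSpace X]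
    [BaireSpace X] [Countable ι] {s : Set X} (hs : IsOpen s) (hne : s.Nonempty)
    {f : ι → Set X} (hf : ∀ i, IsOpen (f i)) (hd : ∀ i, s ⊆ closure (f i)) :
    (s ∩ ⋂ i, f i).Nonempty := by
  have hdense : Dense (⋂ i, f i ∪ (closure s)ᶜ) := by
    refine dense_iInter_of_isOpen (fun i => (hf i).union isClosed_closure.isOpen_compl)
      fun i z => ?_
    by_cases hz : z ∈ closure s
    · exact closure_mono subset_union_left (closure_minimal (hd i) isClosed_closure hz)
    · exact subset_closure (Or.inr hz)
  obtain ⟨z, hzs, hz⟩ := hdense.inter_open_nonempty s hs hne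
  exact ⟨z, hzs, mem_iInter.2 fun i =>
    (mem_iInter.1 hz i).resolve_right (not_not.2 (subset_closure hzs))⟩

theorem mem_closure_iUnion_iterate_preimage_of_mem_extLimitSet {X : Type*}
    [TopologicalSpace X] {T : X → X} {w x : X} (hx : x ∈ extLimitSet T w) {s : Set X}
    (hs : s ∈ 𝓝 x) (N : ℕ) : w ∈ closure (⋃ n ≥ N, T^[n] ⁻¹' s) := by
  obtain ⟨k, hk, -, u, hu, hux⟩ := hx
  refine mem_closure_of_tendsto hu ?_
  filter_upwards [hk.tendsto_atTop.eventually_ge_atTop N, hux hs] with j hjN hjs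
  exact mem_iUnion₂.2 ⟨k j, hjN, hjs⟩

theorem mem_limitSet_of_mapClusterPt {X : Type*} [TopologicalSpace X]
    [FirstCountableTopology X] {T : X → X} {x z : X}
    (h : MapClusterPt x atTop fun n => T^[n] z) : x ∈ limitSet T z := by
  obtain ⟨ψ, hψ, hlim⟩ := h.tendsto_subseq
  exact ⟨fun n => ψ (n + 1), hψ.comp (strictMono_id.add_const 1),
    fun n => (Nat.succ_pos n).trans_le hψ.le_apply, hlim.comp (tendsto_add_atTop_nat 1)⟩

theorem stmt0 {X : Type*} [MetricSpace X] [CompleteSpace X] (T : X → X)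
    (hT : Continuous T) (x y : X) (ε : ℝ) (hε : 0 < ε)
    (h : ∀ w ∈ ball y ε, x ∈ extLimitSet T w) :
    ∃ z ∈ ball y ε, x ∈ limitSet T z := by
  set U : ℕ × ℕ → Set X := fun p => ⋃ n ≥ p.2, T^[n] ⁻¹' ball x (1 / (p.1 + 1))
  have hU_open : ∀ p, IsOpen (U p) := fun p =>
    isOpen_biUnion fun n _ => isOpen_ball.preimage (hT.iterate n)
  have hU_dense : ∀ p, ball y ε ⊆ closure (U p) := fun p w hw =>
    mem_closure_iUnion_iterate_preimage_of_mem_extLimitSet (h w hw)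
      (ball_mem_nhds x Nat.one_div_pos_of_nat) p.2
  obtain ⟨z, hz, hzU⟩ :=
    isOpen_ball.inter_iInter_nonempty_of_subset_closure (nonempty_ball.2 hε) hU_open hU_dense
  refine ⟨z, hz, mem_limitSet_of_mapClusterPt ?_⟩
  rw [nhds_basis_ball_inv_nat_succ.mapClusterPt_iff_frequently]
  intro m _
  rw [frequently_atTop]
  intro N
  simpa [U] using mem_iInter.1 hzU (m, N)
end

section
/- Let X be a complete metric space and T : X → X a continuous map. Suppose there are points x, y ∈ X and ε > 0 such that x ∈ J(w) and w ∈ J(w) for every w in the open ball B(y, ε). Then there exists a point z ∈ B(y, ε) that is recurrent (z ∈ L(z)) and satisfies x ∈ L(z). -/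
open Filter Topology Set Metric

lemma step_lemma {X : Type*} [MetricSpace X] {T : X → X} (hT : Continuous T)
    {p c : X} (hp : p ∈ extLimitSet T c) (N : ℕ) {δ r : ℝ}
    (hδ : 0 < δ) (hr : 0 < r) :
    ∃ n, N < n ∧ ∃ c' r', 0 < r' ∧ r' ≤ δ ∧ closedBall c' r' ⊆ ball c r ∧
      ∀ z ∈ closedBall c' r', T^[n] z ∈ ball p δ := by
  obtain ⟨k, hk, -, u, hu, huT⟩ := hp
  have h1 : ∀ᶠ m in atTop, u m ∈ ball c r := hu (ball_mem_nhds c hr)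
  have h2 : ∀ᶠ m in atTop, T^[k m] (u m) ∈ ball p δ := huT (ball_mem_nhds p hδ)
  obtain ⟨m, hmN, hm1, hm2⟩ := ((eventually_ge_atTop (N + 1)).and (h1.and h2)).exists
  have hNm : N < k m := lt_of_lt_of_le (Nat.lt_of_lt_of_le (Nat.lt_succ_self N) hmN) hk.le_apply
  have hopen : IsOpen (ball c r ∩ T^[m |> k] ⁻¹' ball p δ) :=
    isOpen_ball.inter (isOpen_ball.preimage (hT.iterate (k m)))
  have hmem : u m ∈ ball c r ∩ T^[k m] ⁻¹' ball p δ := ⟨hm1, hm2⟩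
  obtain ⟨r', hr', hsub⟩ := (Metric.nhds_basis_closedBall.mem_iff).mp
    (hopen.mem_nhds hmem)
  refine ⟨k m, hNm, u m, min r' δ, lt_min hr' hδ, min_le_right _ _, ?_, ?_⟩
  · exact (closedBall_subset_closedBall (min_le_left _ _)).trans (hsub.trans inter_subset_left)
  · intro z hz
    exact (hsub ((closedBall_subset_closedBall (min_le_left _ _)) hz)).2

theorem stmt1 {X : Type*} [MetricSpace X] [CompleteSpace X] (T : X → X)
    (hT : Continuous T) (x y : X) (ε : ℝ) (hε : 0 < ε)
    (h : ∀ w ∈ ball y ε, x ∈ extLimitSet T w)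
    (h' : ∀ w ∈ ball y ε, w ∈ extLimitSet T w) :
    ∃ z ∈ ball y ε, z ∈ limitSet T z ∧ x ∈ limitSet T z := by
  classical
  -- one construction step
  have key : ∀ (k : ℕ) (s : ℕ × X × ℝ), ∃ s' : ℕ × X × ℝ,
      (0 < s.2.2 ∧ closedBall s.2.1 s.2.2 ⊆ ball y ε) →
      (s.1 < s'.1 ∧ 0 < s'.2.2 ∧ s'.2.2 ≤ 1 / (k + 1) ∧
        closedBall s'.2.1 s'.2.2 ⊆ ball s.2.1 s.2.2 ∧
        ∀ z ∈ closedBall s'.2.1 s'.2.2,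
          T^[s'.1] z ∈ ball (if Even k then s.2.1 else x) (1 / (k + 1))) := by
    intro k s
    by_cases hs : 0 < s.2.2 ∧ closedBall s.2.1 s.2.2 ⊆ ball y ε
    · obtain ⟨hr, hsub⟩ := hs
      have hc : s.2.1 ∈ ball y ε := hsub (mem_closedBall_self hr.le)
      have hδ : (0 : ℝ) < 1 / (k + 1) := by positivity
      have hp : (if Even k then s.2.1 else x) ∈ extLimitSet T s.2.1 := by
        split
        · exact h' _ hc
        · exact h _ hc
      obtain ⟨n, hn, c', r', h1, h2, h3, h4⟩ := step_lemma hT hp s.1 hδ hr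
      exact ⟨(n, c', r'), fun _ => ⟨hn, h1, h2, h3, h4⟩⟩
    · exact ⟨s, fun hh => absurd hh hs⟩
  choose gg hg using key
  let seq : ℕ → ℕ × X × ℝ := fun k =>
    Nat.rec (motive := fun _ => ℕ × X × ℝ) ((0 : ℕ), y, ε / 2) (fun k s => gg k s) k
  have hseq : ∀ k, seq (k + 1) = gg k (seq k) := fun k => rfl
  set nn : ℕ → ℕ := fun k => (seq k).1 with hnn
  set cc : ℕ → X := fun k => (seq k).2.1 with hcc
  set rr : ℕ → ℝ := fun k => (seq k).2.2 with hrr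
  -- invariant
  have inv : ∀ k, 0 < rr k ∧ closedBall (cc k) (rr k) ⊆ ball y ε := by
    intro k
    induction k with
    | zero =>
      refine ⟨half_pos hε, closedBall_subset_ball ?_⟩
      show ε / 2 < ε
      linarith
    | succ k ih =>
      obtain ⟨-, h1, -, h3, -⟩ := hg k (seq k) ih
      exact ⟨h1, (h3.trans ball_subset_closedBall).trans ih.2⟩
  have props : ∀ k, nn k < nn (k + 1) ∧ 0 < rr (k + 1) ∧ rr (k + 1) ≤ 1 / (k + 1) ∧
      closedBall (cc (k + 1)) (rr (k + 1)) ⊆ ball (cc k) (rr k) ∧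
      ∀ z ∈ closedBall (cc (k + 1)) (rr (k + 1)),
        T^[nn (k + 1)] z ∈ ball (if Even k then cc k else x) (1 / (k + 1)) :=
    fun k => hg k (seq k) (inv k)
  -- nested closed balls
  have nested : ∀ k, closedBall (cc (k + 1)) (rr (k + 1)) ⊆ closedBall (cc k) (rr k) :=
    fun k => ((props k).2.2.2.1).trans ball_subset_closedBall
  have anti : Antitone fun k => closedBall (cc k) (rr k) :=
    antitone_nat_of_succ_le nested
  have memball : ∀ j k, k ≤ j → cc j ∈ closedBall (cc k) (rr k) :=
    fun j k hkj => anti hkj (mem_closedBall_self (inv j).1.le)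
  -- radii tend to zero
  have hr0 : Tendsto rr atTop (𝓝 0) := by
    apply squeeze_zero' (Eventually.of_forall fun k => (inv k).1.le)
      (g := fun k : ℕ => 1 / (k : ℝ))
    · filter_upwards [eventually_ge_atTop 1] with k hk
      rcases k with _ | m
      · omega
      · have := (props m).2.2.1
        push_cast
        linarith
    · exact tendsto_one_div_atTop_nhds_zero_nat
  -- Cauchy sequence of centers
  have hcauchy : CauchySeq cc := by
    apply cauchySeq_of_le_tendsto_0 (b := fun N => 2 * rr N)
    · intro a b N ha hb
      have h1 := memball a N ha
      have h2 := memball b N hb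
      rw [mem_closedBall] at h1 h2
      calc dist (cc a) (cc b) ≤ dist (cc a) (cc N) + dist (cc N) (cc b) := dist_triangle _ _ _
        _ ≤ rr N + rr N := by rw [dist_comm (cc N)]; linarith
        _ = 2 * rr N := by ring
    · simpa using hr0.const_mul 2
  obtain ⟨z, hz⟩ := cauchySeq_tendsto_of_complete hcauchy
  have hzmem : ∀ k, z ∈ closedBall (cc k) (rr k) := by
    intro k
    apply (Metric.isClosed_closedBall (x := cc k) (ε := rr k)).mem_of_tendsto hz
    filter_upwards [eventually_ge_atTop k] with j hj
    exact memball j k hj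
  have hzball : z ∈ ball y ε := (inv 0).2 (hzmem 0)
  -- strict monotonicity of times
  have hnmono : StrictMono nn := strictMono_nat_of_lt_succ fun k => (props k).1
  -- orbit estimates
  have horb : ∀ k, T^[nn (k + 1)] z ∈ ball (if Even k then cc k else x) (1 / (k + 1)) :=
    fun k => (props k).2.2.2.2 z (hzmem (k + 1))
  refine ⟨z, hzball, ?_, ?_⟩
  · -- z recurrent : use even stages k = 2m
    refine ⟨fun m => nn (2 * m + 1), ?_, ?_, ?_⟩
    · intro a b hab
      show nn (2 * a + 1) < nn (2 * b + 1)
      exact hnmono (by omega : 2 * a + 1 < 2 * b + 1)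
    · intro m
      show 0 < nn (2 * m + 1)
      have : 2 * m + 1 ≤ nn (2 * m + 1) := hnmono.le_apply
      omega
    · rw [tendsto_iff_dist_tendsto_zero]
      apply squeeze_zero (fun m => dist_nonneg)
        (g := fun m : ℕ => 1 / ((m : ℝ) + 1) + rr (2 * m))
      · intro m
        have h1 := horb (2 * m)
        rw [if_pos (even_two_mul m), mem_ball] at h1
        have h2 : dist z (cc (2 * m)) ≤ rr (2 * m) := hzmem (2 * m)
        have h3 : (1 : ℝ) / (2 * m + 1) ≤ 1 / (m + 1) := by
          apply one_div_le_one_div_of_le (by positivity); push_cast; linarith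
        calc dist (T^[nn (2 * m + 1)] z) z
            ≤ dist (T^[nn (2 * m + 1)] z) (cc (2 * m)) + dist (cc (2 * m)) z :=
              dist_triangle _ _ _
          _ ≤ 1 / ((m : ℝ) + 1) + rr (2 * m) := by
              rw [dist_comm (cc (2 * m))]
              have : (1 : ℝ) / (2 * (m : ℕ) + 1) = 1 / (2 * (m : ℝ) + 1) := by push_cast; ring_nf
              push_cast at h1
              linarith
      · have h4 : Tendsto (fun m => rr (2 * m)) atTop (𝓝 0) :=
          hr0.comp (tendsto_atTop_mono (fun m => by omega : ∀ m, m ≤ 2 * m) tendsto_id)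
        simpa using (tendsto_one_div_add_atTop_nhds_zero_nat).add h4
  · -- x ∈ L(z) : use odd stages k = 2m+1
    refine ⟨fun m => nn (2 * m + 2), ?_, ?_, ?_⟩
    · intro a b hab
      show nn (2 * a + 2) < nn (2 * b + 2)
      exact hnmono (by omega : 2 * a + 2 < 2 * b + 2)
    · intro m
      show 0 < nn (2 * m + 2)
      have : 2 * m + 2 ≤ nn (2 * m + 2) := hnmono.le_apply
      omega
    · rw [tendsto_iff_dist_tendsto_zero]
      apply squeeze_zero (fun m => dist_nonneg) (g := fun m : ℕ => 1 / ((m : ℝ) + 1))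
      · intro m
        have h1 := horb (2 * m + 1)
        rw [if_neg (by simp [Nat.even_add_one, parity_simps]), mem_ball] at h1
        have h3 : (1 : ℝ) / (2 * m + 1 + 1) ≤ 1 / (m + 1) := by
          apply one_div_le_one_div_of_le (by positivity); linarith
        push_cast at h1
        linarith
      · exact tendsto_one_div_add_atTop_nhds_zero_nat
end

section
/- Let (X, d) be a complete metric space and T : X → X continuous. Suppose there are points x, y ∈ X and ε > 0 such that x ∈ J(w) for every w ∈ B(y, ε). Then the set D = { z ∈ closure(B(y, ε)) : x ∈ L(z) } is a dense G_δ subset of closure(B(y, ε)). -/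
open Filter Topology Set Metric

/-!
For each radius `1/(m+1)` and time `N`, the points `z` whose orbit visits `B(x, 1/(m+1))` after
time `N` form an open set, and `z` has `x ∈ L(z)` exactly when it lies in all of them. The
hypothesis `x ∈ J(w)` produces such points `u` arbitrarily close to every `w ∈ B(y, ε)`, so each
of these open sets is dense in the complete space `closure (B(y, ε))`, and Baire's theorem
concludes.
-/

section

variable {X : Type*} [TopologicalSpace X] {T : X → X} {x z w : X}

lemma mem_limitSet_iff_mapClusterPt [FirstCountableTopology X] :
    x ∈ limitSet T z ↔ MapClusterPt x atTop (fun n => T^[n] z) := by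
  constructor
  · rintro ⟨k, hk, -, hlim⟩
    exact MapClusterPt.of_comp hk.tendsto_atTop hlim.mapClusterPt
  · intro hx
    obtain ⟨ψ, hψ, hlim⟩ := hx.tendsto_subseq
    exact ⟨fun n => ψ (n + 1), hψ.comp (strictMono_id.add_const 1),
      fun n => (Nat.succ_pos n).trans_le hψ.le_apply, hlim.comp (tendsto_add_atTop_nat 1)⟩

lemma mem_closure_inter_iUnion_of_mem_extLimitSet {U O : Set X} (hU : IsOpen U) (hw : w ∈ U)
    (hx : x ∈ extLimitSet T w) (hO : O ∈ 𝓝 x) (N : ℕ) :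
    w ∈ closure (U ∩ ⋃ n ≥ N, T^[n] ⁻¹' O) := by
  obtain ⟨k, hk, -, u, hu, hTu⟩ := hx
  refine mem_closure_of_tendsto hu ?_
  filter_upwards [hu.eventually (hU.mem_nhds hw), hTu.eventually hO,
    hk.tendsto_atTop.eventually_ge_atTop N] with n hnU hnO hnN
  exact ⟨hnU, mem_iUnion₂.2 ⟨k n, hnN, hnO⟩⟩

lemma dense_coe_preimage_closure {s t : Set X} (h : s ⊆ closure (s ∩ t)) :
    Dense ((↑) ⁻¹' t : Set (closure s)) := by
  rw [Subtype.dense_iff, Subtype.image_preimage_coe]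
  exact closure_minimal (h.trans (closure_mono (inter_subset_inter_left _ subset_closure)))
    isClosed_closure

end

lemma setOf_mem_limitSet_eq_iInter {X : Type*} [PseudoMetricSpace X] (T : X → X) (x : X) :
    {z | x ∈ limitSet T z} = ⋂ m : ℕ, ⋂ N : ℕ, ⋃ n ≥ N, T^[n] ⁻¹' ball x (1 / (m + 1)) := by
  ext z
  simp only [mem_ofPred_eq, mem_limitSet_iff_mapClusterPt,
    nhds_basis_ball_inv_nat_succ.mapClusterPt_iff_frequently, frequently_atTop, mem_iInter,
    mem_iUnion, mem_preimage, exists_prop, forall_const]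

theorem stmt2_general {X : Type*} [MetricSpace X] [CompleteSpace X] (T : X → X)
    (hT : Continuous T) (x y : X) (ε : ℝ)
    (h : ∀ w ∈ ball y ε, x ∈ extLimitSet T w) :
    IsGδ {z : closure (ball y ε) | x ∈ limitSet T (z : X)} ∧
      Dense {z : closure (ball y ε) | x ∈ limitSet T (z : X)} := by
  set V : ℕ → ℕ → Set X := fun m N => ⋃ n ≥ N, T^[n] ⁻¹' ball x (1 / (m + 1))
  have hV_open (m N : ℕ) : IsOpen ((↑) ⁻¹' V m N : Set (closure (ball y ε))) :=
    (isOpen_biUnion fun n _ => isOpen_ball.preimage (hT.iterate n)).preimage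
      continuous_subtype_val
  have hV_dense (m N : ℕ) : Dense ((↑) ⁻¹' V m N : Set (closure (ball y ε))) :=
    dense_coe_preimage_closure fun w hw => mem_closure_inter_iUnion_of_mem_extLimitSet
      isOpen_ball hw (h w hw) (ball_mem_nhds x (by positivity)) N
  have hD : {z : closure (ball y ε) | x ∈ limitSet T (z : X)} =
      ⋂ m, ⋂ N, (↑) ⁻¹' V m N := by
    simp only [V, ← preimage_iInter, ← setOf_mem_limitSet_eq_iInter]
    rfl
  have : CompleteSpace (closure (ball y ε)) := isClosed_closure.completeSpace_coe
  rw [hD]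
  exact ⟨.iInter fun m => .iInter_of_isOpen fun N => hV_open m N,
    dense_of_mem_residual <| countable_iInter_mem.2 fun m => countable_iInter_mem.2 fun N =>
      residual_of_dense_open (hV_open m N) (hV_dense m N)⟩

theorem stmt2 {X : Type*} [MetricSpace X] [CompleteSpace X] (T : X → X)
    (hT : Continuous T) (x y : X) (ε : ℝ) (hε : 0 < ε)
    (h : ∀ w ∈ ball y ε, x ∈ extLimitSet T w) :
    IsGδ {z : closure (ball y ε) | x ∈ limitSet T (z : X)} ∧
      Dense {z : closure (ball y ε) | x ∈ limitSet T (z : X)} :=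
  stmt2_general T hT x y ε h
end

section
/- Let (X, d) be a complete metric space and T : X → X continuous. Suppose there are points x, y ∈ X and ε > 0 such that x ∈ J(w) and w ∈ J(w) for every w ∈ B(y, ε). Then the set D = { z ∈ closure(B(y, ε)) : x ∈ L(z) and z ∈ L(z) } is a dense G_δ subset of closure(B(y, ε)). -/
open Filter Topology Set Metric

/-! Both conditions `x ∈ L(z)` and `z ∈ L(z)` have the form `f z ∈ L(z)` with `f` continuous.
Such a set is the countable intersection over `m, n` of the open sets
`{z | ∃ k ≥ m, d(T^k z, f z) < 1/(n+1)}`, and each of these is dense near every `w` with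
`f w ∈ J(w)`. Baire's theorem in the complete space `closure (ball y ε)` finishes the proof. -/

section LimitSet

variable {X : Type*} [PseudoMetricSpace X] {T f : X → X}

def iterateNearSet (T f : X → X) (m : ℕ) (δ : ℝ) : Set X :=
  ⋃ k ≥ m, {z | dist (T^[k] z) (f z) < δ}

theorem mem_limitSet_iff {z p : X} :
    p ∈ limitSet T z ↔ ∀ n : ℕ, ∃ᶠ k in atTop, dist (T^[k] z) p < 1 / (n + 1) := by
  constructor
  · rintro ⟨k, hk, -, hkp⟩ n
    have hclose : ∀ᶠ j in atTop, dist (T^[k j] z) p < 1 / (n + 1) :=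
      hkp.eventually (ball_mem_nhds p Nat.one_div_pos_of_nat)
    exact hk.tendsto_atTop.frequently hclose.frequently
  · intro h
    obtain ⟨k, hk, hkp⟩ := extraction_forall_of_frequently fun n =>
      (h n).and_eventually (eventually_gt_atTop 0)
    refine ⟨k, hk, fun n => (hkp n).2, ?_⟩
    rw [tendsto_iff_dist_tendsto_zero]
    exact squeeze_zero (fun _ => dist_nonneg) (fun n => (hkp n).1.le)
      tendsto_one_div_add_atTop_nhds_zero_nat

theorem setOf_mem_limitSet_eq :
    {z | f z ∈ limitSet T z} = ⋂ n : ℕ, ⋂ m : ℕ, iterateNearSet T f m (1 / (n + 1)) := by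
  ext z
  simp only [mem_ofPred_eq, mem_limitSet_iff, frequently_atTop, iterateNearSet, mem_iInter,
    mem_iUnion, exists_prop]

theorem isOpen_iterateNearSet (hT : Continuous T) (hf : Continuous f) (m : ℕ) (δ : ℝ) :
    IsOpen (iterateNearSet T f m δ) :=
  isOpen_biUnion fun k _ => isOpen_lt ((hT.iterate k).dist hf) continuous_const

theorem isGδ_setOf_mem_limitSet (hT : Continuous T) (hf : Continuous f) :
    IsGδ {z | f z ∈ limitSet T z} := by
  rw [setOf_mem_limitSet_eq]
  exact .iInter fun n => .iInter fun m => (isOpen_iterateNearSet hT hf m _).isGδ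

/-- Points `u` near `w` with `T^[k] u` close to `f w` have `T^[k] u` close to `f u`
by continuity of `f`. -/
theorem subset_closure_iterateNearSet_inter {s : Set X} (hs : IsOpen s) (hf : Continuous f)
    (h : ∀ w ∈ s, f w ∈ extLimitSet T w) (m : ℕ) {δ : ℝ} (hδ : 0 < δ) :
    s ⊆ closure (iterateNearSet T f m δ ∩ s) := by
  intro w hw
  rw [mem_closure_iff_nhds]
  intro U hU
  obtain ⟨k, hk, -, u, hu, hTu⟩ := h w hw
  have hdist : Tendsto (fun j => dist (T^[k j] (u j)) (f (u j))) atTop (𝓝 0) := by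
    simpa using hTu.dist ((hf.tendsto w).comp hu)
  obtain ⟨j, hmj, hδj, huU, hus⟩ := ((hk.tendsto_atTop.eventually_ge_atTop m).and
    ((hdist.eventually (gt_mem_nhds hδ)).and
      ((hu.eventually_mem hU).and (hu.eventually_mem (hs.mem_nhds hw))))).exists
  exact ⟨u j, huU, mem_biUnion hmj hδj, hus⟩

theorem setOf_mem_limitSet_mem_residual {s : Set X} (hs : IsOpen s) (hT : Continuous T)
    (hf : Continuous f) (h : ∀ w ∈ s, f w ∈ extLimitSet T w) :
    {z : closure s | f z ∈ limitSet T z} ∈ residual (closure s) := by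
  have hdense : ∀ n m : ℕ,
      Dense ((↑) ⁻¹' iterateNearSet T f m (1 / (n + 1)) : Set (closure s)) := by
    intro n m
    rw [Subtype.dense_iff, Subtype.image_preimage_coe]
    calc closure s
        ⊆ closure (iterateNearSet T f m (1 / (n + 1)) ∩ s) :=
          closure_minimal (subset_closure_iterateNearSet_inter hs hf h m
            Nat.one_div_pos_of_nat) isClosed_closure
      _ ⊆ closure (closure s ∩ iterateNearSet T f m (1 / (n + 1))) :=
          closure_mono fun z hz => ⟨subset_closure hz.2, hz.1⟩
  change (↑) ⁻¹' {z | f z ∈ limitSet T z} ∈ residual (closure s)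
  rw [setOf_mem_limitSet_eq, preimage_iInter]
  refine countable_iInter_mem.2 fun n => ?_
  rw [preimage_iInter]
  exact countable_iInter_mem.2 fun m => residual_of_dense_open
    ((isOpen_iterateNearSet hT hf m _).preimage continuous_subtype_val) (hdense n m)

end LimitSet

theorem stmt3_general {X : Type*} [MetricSpace X] [CompleteSpace X] (T : X → X)
    (hT : Continuous T) (x y : X) (ε : ℝ)
    (h : ∀ w ∈ ball y ε, x ∈ extLimitSet T w)
    (h' : ∀ w ∈ ball y ε, w ∈ extLimitSet T w) :
    IsGδ {z : closure (ball y ε) | x ∈ limitSet T (z : X) ∧ (z : X) ∈ limitSet T (z : X)} ∧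
      Dense {z : closure (ball y ε) | x ∈ limitSet T (z : X) ∧ (z : X) ∈ limitSet T (z : X)} := by
  have : CompleteSpace (closure (ball y ε)) := isClosed_closure.completeSpace_coe
  refine ⟨((isGδ_setOf_mem_limitSet hT continuous_const).inter
    (isGδ_setOf_mem_limitSet hT continuous_id)).preimage continuous_subtype_val,
    dense_of_mem_residual (inter_mem ?_ ?_)⟩
  exacts [setOf_mem_limitSet_mem_residual isOpen_ball hT continuous_const h,
    setOf_mem_limitSet_mem_residual isOpen_ball hT continuous_id h']

theorem stmt3 {X : Type*} [MetricSpace X] [CompleteSpace X] (T : X → X)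
    (hT : Continuous T) (x y : X) (ε : ℝ) (hε : 0 < ε)
    (h : ∀ w ∈ ball y ε, x ∈ extLimitSet T w)
    (h' : ∀ w ∈ ball y ε, w ∈ extLimitSet T w) :
    IsGδ {z : closure (ball y ε) | x ∈ limitSet T (z : X) ∧ (z : X) ∈ limitSet T (z : X)} ∧
      Dense {z : closure (ball y ε) | x ∈ limitSet T (z : X) ∧ (z : X) ∈ limitSet T (z : X)} :=
  stmt3_general T hT x y ε h h'
end

section
/- Let X be a complete metric space and T : X → X a continuous map such that x ∈ J(w) for every x, w ∈ X (equivalently, J(w) = X for all w). Then for every x ∈ X and every non-empty open set V ⊆ X there exists a point z ∈ V whose orbit closure contains x, i.e., x ∈ closure{T^n z : n ≥ 0}. -/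
open Filter Topology Set Metric

theorem stmt6 {X : Type*} [MetricSpace X] [CompleteSpace X] (T : X → X)
    (hT : Continuous T) (h : ∀ x w : X, x ∈ extLimitSet T w)
    (x : X) (V : Set X) (hV : IsOpen V) (hVne : V.Nonempty) :
    ∃ z ∈ V, x ∈ closure (Set.range fun n : ℕ => T^[n] z) := by
  set D : ℕ → Set X := fun k => ⋃ n : ℕ, (T^[n]) ⁻¹' (Metric.ball x (1/(k+1))) with hD
  have hDopen : ∀ k, IsOpen (D k) := fun k =>
    isOpen_iUnion fun n => Metric.isOpen_ball.preimage (hT.iterate n)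
  have hDdense : ∀ k, Dense (D k) := by
    intro k
    rw [dense_iff_inter_open]
    rintro U hU ⟨w, hw⟩
    obtain ⟨kn, hmono, hpos, u, hu, hlim⟩ := h x w
    have h1 : ∀ᶠ n in atTop, u n ∈ U := hu (hU.mem_nhds hw)
    have h2 : ∀ᶠ n in atTop, T^[kn n] (u n) ∈ Metric.ball x (1/(k+1)) :=
      hlim (Metric.ball_mem_nhds x (by positivity))
    obtain ⟨n, hn1, hn2⟩ := (h1.and h2).exists
    exact ⟨u n, hn1, mem_iUnion.2 ⟨kn n, hn2⟩⟩
  have hdense : Dense (⋂ k, D k) := dense_iInter_of_isOpen hDopen hDdense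
  obtain ⟨z, hzV, hzD⟩ := hdense.inter_open_nonempty V hV hVne
  refine ⟨z, hzV, Metric.mem_closure_iff.2 fun ε hε => ?_⟩
  obtain ⟨k, hk⟩ := exists_nat_one_div_lt hε
  have hz : z ∈ D k := mem_iInter.1 hzD k
  obtain ⟨n, hn⟩ := mem_iUnion.1 hz
  refine ⟨T^[n] z, ⟨n, rfl⟩, ?_⟩
  have : dist (T^[n] z) x < 1/(k+1) := hn
  rw [dist_comm]
  calc dist (T^[n] z) x < 1/(k+1) := this
    _ < ε := by exact_mod_cast hk
end

section
/- Let X be a completely metrizable topological space without isolated points and T : X → X a continuous map. If T is topologically transitive, then J(x) = X for every x ∈ X. -/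
open Filter Topology Set Metric

lemma lemA {X : Type*} [MetricSpace X]
    (hiso : ∀ x : X, (𝓝[≠] x).NeBot)
    (T : X → X) (htrans : ∀ U V : Set X, IsOpen U → IsOpen V → U.Nonempty → V.Nonempty →
      ∃ n : ℕ, (T^[n] '' U ∩ V).Nonempty)
    (U V : Set X) (hU : IsOpen U) (hV : IsOpen V) (hUne : U.Nonempty) (hVne : V.Nonempty) :
    ∃ n, 1 ≤ n ∧ (T^[n] '' U ∩ V).Nonempty := by
  by_cases h : (U ∩ V).Nonempty
  · obtain ⟨z, hzU, hzV⟩ := h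
    have hW : IsOpen (U ∩ V) := hU.inter hV
    have hmem : U ∩ V ∈ 𝓝 z := hW.mem_nhds ⟨hzU, hzV⟩
    have hmem' : (U ∩ V) ∩ {z}ᶜ ∈ 𝓝[≠] z :=
      Filter.inter_mem (mem_nhdsWithin_of_mem_nhds hmem) self_mem_nhdsWithin
    obtain ⟨b, ⟨hbW, hbz⟩⟩ := (hiso z).nonempty_of_mem hmem'
    have hbz' : b ≠ z := by simpa using hbz
    have hdist : 0 < dist z b := dist_pos.mpr (Ne.symm hbz')
    set r := dist z b / 2 with hr
    have hrpos : 0 < r := by positivity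
    have hdisj : Disjoint (ball z r ∩ (U ∩ V)) (ball b r ∩ (U ∩ V)) := by
      rw [Set.disjoint_left]
      rintro w ⟨hw1, -⟩ ⟨hw2, -⟩
      have : dist z b ≤ dist z w + dist w b := dist_triangle _ _ _
      rw [mem_ball] at hw1 hw2
      rw [dist_comm] at hw1
      linarith [hw1, hw2]
    have hA : IsOpen (ball z r ∩ (U ∩ V)) := isOpen_ball.inter hW
    have hB : IsOpen (ball b r ∩ (U ∩ V)) := isOpen_ball.inter hW
    have hAne : (ball z r ∩ (U ∩ V)).Nonempty := ⟨z, mem_ball_self hrpos, hzU, hzV⟩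
    have hBne : (ball b r ∩ (U ∩ V)).Nonempty := ⟨b, mem_ball_self hrpos, hbW⟩
    obtain ⟨n, w, hw⟩ := htrans _ _ hA hB hAne hBne
    refine ⟨n, ?_, ⟨w, ?_⟩⟩
    · rcases Nat.eq_zero_or_pos n with rfl | hp
      · exfalso
        simp only [Function.iterate_zero, Set.image_id] at hw
        exact Set.disjoint_left.mp hdisj hw.1 hw.2
      · exact hp
    · obtain ⟨⟨u, hu, rfl⟩, hwB⟩ := hw
      exact ⟨⟨u, hu.2.1, rfl⟩, hwB.2.2⟩
  · obtain ⟨n, hn⟩ := htrans U V hU hV hUne hVne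
    refine ⟨n, ?_, hn⟩
    rcases Nat.eq_zero_or_pos n with rfl | hp
    · exfalso; apply h; simpa using hn
    · exact hp

lemma lemB {X : Type*} [MetricSpace X]
    (hiso : ∀ x : X, (𝓝[≠] x).NeBot)
    (T : X → X) (hT : Continuous T)
    (htrans : ∀ U V : Set X, IsOpen U → IsOpen V → U.Nonempty → V.Nonempty →
      ∃ n : ℕ, (T^[n] '' U ∩ V).Nonempty)
    (U V : Set X) (hU : IsOpen U) (hV : IsOpen V) (hUne : U.Nonempty) (hVne : V.Nonempty) :
    ∀ N : ℕ, ∃ n, N ≤ n ∧ ∃ u ∈ U, T^[n] u ∈ V := by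
  intro N
  induction N with
  | zero =>
    obtain ⟨n, -, w, ⟨u, hu, rfl⟩, hwV⟩ := lemA hiso T htrans U V hU hV hUne hVne
    exact ⟨n, Nat.zero_le _, u, hu, hwV⟩
  | succ N ih =>
    obtain ⟨n, hn, u, huU, huV⟩ := ih
    set W := U ∩ T^[n] ⁻¹' V with hWdef
    have hWopen : IsOpen W := hU.inter ((hV.preimage (hT.iterate n)))
    have hWne : W.Nonempty := ⟨u, huU, huV⟩
    obtain ⟨k, hk, w, ⟨v, hv, rfl⟩, hwW⟩ := lemA hiso T htrans U W hU hWopen hUne hWne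
    refine ⟨n + k, by omega, v, hv, ?_⟩
    have : T^[n + k] v = T^[n] (T^[k] v) := Function.iterate_add_apply T n k v
    rw [this]
    exact hwW.2


theorem stmt7 {X : Type*} [MetricSpace X] [CompleteSpace X]
    (hiso : ∀ x : X, (𝓝[≠] x).NeBot)
    (T : X → X) (hT : Continuous T) (htrans : TopTransitive T) :
    ∀ x : X, extLimitSet T x = Set.univ := by
  intro x
  ext y
  simp only [Set.mem_univ, iff_true]
  -- key: for every n, N, there is m ≥ N and u close to x with T^[m] u close to y
  have key : ∀ n N : ℕ, ∃ m, N ≤ m ∧ ∃ u, dist u x < 1 / (n + 1 : ℝ) ∧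
      dist (T^[m] u) y < 1 / (n + 1 : ℝ) := by
    intro n N
    have hε : (0 : ℝ) < 1 / (n + 1 : ℝ) := by positivity
    obtain ⟨m, hm, u, huU, huV⟩ := lemB hiso T hT htrans
      (ball x (1 / (n + 1 : ℝ))) (ball y (1 / (n + 1 : ℝ))) isOpen_ball isOpen_ball
      ⟨x, mem_ball_self hε⟩ ⟨y, mem_ball_self hε⟩ N
    exact ⟨m, hm, u, mem_ball.mp huU, mem_ball.mp huV⟩
  choose f hf hP using key
  -- build the strictly increasing sequence
  set k : ℕ → ℕ := fun n => Nat.rec (f 0 1) (fun n ih => f (n + 1) (ih + 1)) n with hk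
  have hk0 : k 0 = f 0 1 := rfl
  have hksucc : ∀ n, k (n + 1) = f (n + 1) (k n + 1) := fun n => rfl
  have hklt : ∀ n, k n < k (n + 1) := by
    intro n; rw [hksucc]; exact Nat.lt_of_succ_le (hf (n + 1) (k n + 1))
  have hkmono : StrictMono k := strictMono_nat_of_lt_succ hklt
  have hkpos : ∀ n, 0 < k n := by
    intro n
    have h0 : 1 ≤ k 0 := by rw [hk0]; exact hf 0 1
    calc 0 < k 0 := h0
    _ ≤ k n := hkmono.monotone (Nat.zero_le n)
  have hPn : ∀ n : ℕ, ∃ u, dist u x < 1 / (n + 1 : ℝ) ∧ dist (T^[k n] u) y < 1 / (n + 1 : ℝ) := by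
    intro n
    cases n with
    | zero => exact hP 0 1
    | succ m => exact hP (m + 1) (k m + 1)
  choose u hu1 hu2 using hPn
  refine ⟨k, hkmono, hkpos, u, ?_, ?_⟩
  · rw [Metric.tendsto_atTop]
    intro ε hε
    obtain ⟨N, hN⟩ := exists_nat_one_div_lt hε
    refine ⟨N, fun n hn => lt_of_lt_of_le (hu1 n) (le_trans ?_ hN.le)⟩
    gcongr
  · rw [Metric.tendsto_atTop]
    intro ε hε
    obtain ⟨N, hN⟩ := exists_nat_one_div_lt hε
    refine ⟨N, fun n hn => lt_of_lt_of_le (hu2 n) (le_trans ?_ hN.le)⟩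
    gcongr
end

section
/- Let X be a completely metrizable topological space without isolated points and T : X → X continuous. If T is almost topologically transitive (for every pair of non-empty open sets U, V there exists n ≥ 0 with T^n(U) ∩ V ≠ ∅ or T^n(V) ∩ U ≠ ∅), then for every x, y ∈ X one has x ∈ J(y) or y ∈ J(x), and in fact T is topologically transitive. -/
open Filter Topology Set Metric

section Aux

variable {X : Type*} [MetricSpace X]

private lemma tendsto_of_dist_lt' {g : ℕ → X} {z : X}
    (hg : ∀ m : ℕ, dist (g m) z < 1 / ((m : ℝ) + 1)) : Tendsto g atTop (𝓝 z) := by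
  rw [tendsto_iff_dist_tendsto_zero]
  exact squeeze_zero (fun m => dist_nonneg) (fun m => (hg m).le)
    tendsto_one_div_add_atTop_nhds_zero_nat

private lemma mem_ext_of_large (T : X → X) (x y : X)
    (h : ∀ ε : ℝ, 0 < ε → ∀ N : ℕ, ∃ n : ℕ, N ≤ n ∧ ∃ p : X,
      dist p x < ε ∧ dist (T^[n] p) y < ε) :
    y ∈ extLimitSet T x := by
  have step : ∀ m N : ℕ, ∃ q : ℕ × X,
      N ≤ q.1 ∧ dist q.2 x < 1 / ((m : ℝ) + 1) ∧ dist (T^[q.1] q.2) y < 1 / ((m : ℝ) + 1) := by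
    intro m N
    obtain ⟨n, hn, p, hp1, hp2⟩ := h (1 / ((m : ℝ) + 1)) (by positivity) N
    exact ⟨(n, p), hn, hp1, hp2⟩
  let F : ℕ → ℕ × X := fun m =>
    Nat.rec (Classical.choose (step 0 1))
      (fun m ih => Classical.choose (step (m + 1) (ih.1 + 1))) m
  have hF0 : 1 ≤ (F 0).1 ∧ dist (F 0).2 x < 1 / ((0 : ℕ) + 1 : ℝ) ∧
      dist (T^[(F 0).1] (F 0).2) y < 1 / ((0 : ℕ) + 1 : ℝ) := Classical.choose_spec (step 0 1)
  have hFs : ∀ m : ℕ, (F m).1 + 1 ≤ (F (m + 1)).1 ∧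
      dist (F (m + 1)).2 x < 1 / (((m + 1 : ℕ)) + 1 : ℝ) ∧
      dist (T^[(F (m + 1)).1] (F (m + 1)).2) y < 1 / (((m + 1 : ℕ)) + 1 : ℝ) :=
    fun m => Classical.choose_spec (step (m + 1) ((F m).1 + 1))
  have hmono : ∀ m : ℕ, (F m).1 < (F (m + 1)).1 := fun m => (hFs m).1
  have hFd : ∀ m : ℕ, dist (F m).2 x < 1 / ((m : ℝ) + 1) ∧
      dist (T^[(F m).1] (F m).2) y < 1 / ((m : ℝ) + 1) := by
    intro m
    cases m with
    | zero => exact ⟨hF0.2.1, hF0.2.2⟩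
    | succ m => exact ⟨(hFs m).2.1, (hFs m).2.2⟩
  refine ⟨fun m => (F m).1, strictMono_nat_of_lt_succ hmono, ?_, fun m => (F m).2,
    tendsto_of_dist_lt' (fun m => (hFd m).1), tendsto_of_dist_lt' (fun m => (hFd m).2)⟩
  intro m
  exact lt_of_lt_of_le hF0.1 ((strictMono_nat_of_lt_succ hmono).monotone (Nat.zero_le m))

private lemma iter_eq_or_mem (T : X → X) (hT : Continuous T) (x y : X)
    (h : ∀ ε : ℝ, 0 < ε → ∃ n : ℕ, 1 ≤ n ∧ ∃ p : X,
      dist p x < ε ∧ dist (T^[n] p) y < ε) :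
    (∃ n : ℕ, 1 ≤ n ∧ T^[n] x = y) ∨ y ∈ extLimitSet T x := by
  by_cases hbig : ∀ ε : ℝ, 0 < ε → ∀ N : ℕ, ∃ n : ℕ, N ≤ n ∧ ∃ p : X,
      dist p x < ε ∧ dist (T^[n] p) y < ε
  · exact Or.inr (mem_ext_of_large T x y hbig)
  · left
    push_neg at hbig
    obtain ⟨ε₀, hε₀, N, hN⟩ := hbig
    by_contra hne
    push_neg at hne
    have key : ∀ n : ℕ, ∃ δ : ℝ, 0 < δ ∧
        (1 ≤ n → ∀ p : X, dist p x < δ → ¬ dist (T^[n] p) y < δ) := by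
      intro n
      by_cases hn : 1 ≤ n
      · have he : 0 < dist (T^[n] x) y := dist_pos.mpr (hne n hn)
        obtain ⟨δ, hδpos, hδ⟩ := Metric.continuousAt_iff.mp (hT.iterate n).continuousAt
          (dist (T^[n] x) y / 2) (by linarith)
        refine ⟨min δ (dist (T^[n] x) y / 2), by positivity, fun _ p hp hcon => ?_⟩
        have h1 := hδ (lt_of_lt_of_le hp (min_le_left _ _))
        have h2 := lt_of_lt_of_le hcon (min_le_right _ _)
        have h3 := dist_triangle (T^[n] x) (T^[n] p) y
        rw [dist_comm (T^[n] x) (T^[n] p)] at h3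
        linarith
      · exact ⟨1, one_pos, fun h1 => absurd h1 hn⟩
    choose δ hδpos hδ using key
    have hne' : (Finset.range (N + 1)).Nonempty := ⟨0, by simp⟩
    set εf := (Finset.range (N + 1)).inf' hne' δ with hεf
    have hεfpos : 0 < εf := by
      rw [hεf, Finset.lt_inf'_iff]
      exact fun n _ => hδpos n
    obtain ⟨n, hn1, p, hpx, hpy⟩ := h (min ε₀ εf) (lt_min hε₀ hεfpos)
    have hnN : n < N := by
      by_contra hge
      push_neg at hge
      have := hN n hge p (lt_of_lt_of_le hpx (min_le_left _ _))
      have := lt_of_lt_of_le hpy (min_le_left _ _)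
      linarith
    have hmem : n ∈ Finset.range (N + 1) := Finset.mem_range.mpr (by omega)
    have hle : εf ≤ δ n := Finset.inf'_le δ hmem
    exact hδ n hn1 p (lt_of_lt_of_le hpx ((min_le_right _ _).trans hle))
      (lt_of_lt_of_le hpy ((min_le_right _ _).trans hle))

private lemma self_cross (T : X → X)
    (hiso : ∀ x : X, (𝓝[≠] x).NeBot)
    (halmost : ∀ U V : Set X, IsOpen U → IsOpen V → U.Nonempty → V.Nonempty →
      ∃ n : ℕ, (T^[n] '' U ∩ V).Nonempty ∨ (T^[n] '' V ∩ U).Nonempty)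
    (x : X) : ∀ ε : ℝ, 0 < ε → ∃ n : ℕ, 1 ≤ n ∧ ∃ p : X,
      dist p x < ε ∧ dist (T^[n] p) x < ε := by
  intro ε hε
  haveI := hiso x
  obtain ⟨x', hx'b, hx'ne⟩ : ∃ x', x' ∈ ball x (ε / 4) ∧ x' ∈ ({x} : Set X)ᶜ := by
    obtain ⟨x', hx'⟩ := Filter.nonempty_of_mem (Filter.inter_mem
      (mem_nhdsWithin_of_mem_nhds (ball_mem_nhds x (show (0:ℝ) < ε / 4 by positivity)))
      (self_mem_nhdsWithin (s := ({x} : Set X)ᶜ)))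
    exact ⟨x', hx'.1, hx'.2⟩
  have hxne : x' ≠ x := by simpa using hx'ne
  have hd : 0 < dist x' x := dist_pos.mpr hxne
  have hx'lt : dist x' x < ε / 4 := mem_ball.mp hx'b
  set r := dist x' x / 2 with hr
  have hrpos : 0 < r := by positivity
  have hdisj : ∀ z : X, dist z x < r → dist z x' < r → False := by
    intro z h1 h2
    have h3 := dist_triangle x' z x
    rw [dist_comm x' z] at h3
    have : dist x' x < dist x' x := by
      calc dist x' x ≤ dist z x' + dist z x := h3
      _ < r + r := by linarith
      _ = dist x' x := by rw [hr]; ring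
    exact lt_irrefl _ this
  obtain ⟨n, hcase⟩ := halmost (ball x r) (ball x' r) isOpen_ball isOpen_ball
    ⟨x, mem_ball_self hrpos⟩ ⟨x', mem_ball_self hrpos⟩
  have hn1 : 1 ≤ n := by
    by_contra h0
    have hn0 : n = 0 := by omega
    subst hn0
    rcases hcase with ⟨z, ⟨p, hp, hpz⟩, hz⟩ | ⟨z, ⟨p, hp, hpz⟩, hz⟩ <;>
      simp only [Function.iterate_zero_apply] at hpz <;> subst hpz
    · exact hdisj _ (mem_ball.mp hp) (mem_ball.mp hz)
    · exact hdisj _ (mem_ball.mp hz) (mem_ball.mp hp)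
  rcases hcase with ⟨z, ⟨p, hp, hpz⟩, hz⟩ | ⟨z, ⟨p, hp, hpz⟩, hz⟩
  · refine ⟨n, hn1, p, ?_, ?_⟩
    · have := mem_ball.mp hp
      linarith
    · rw [hpz]
      have h1 := mem_ball.mp hz
      have h2 := dist_triangle z x' x
      linarith
  · refine ⟨n, hn1, p, ?_, ?_⟩
    · have h1 := mem_ball.mp hp
      have h2 := dist_triangle p x' x
      linarith
    · rw [hpz]
      have := mem_ball.mp hz
      linarith

private lemma self_mem_ext (T : X → X) (hT : Continuous T)
    (hiso : ∀ x : X, (𝓝[≠] x).NeBot)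
    (halmost : ∀ U V : Set X, IsOpen U → IsOpen V → U.Nonempty → V.Nonempty →
      ∃ n : ℕ, (T^[n] '' U ∩ V).Nonempty ∨ (T^[n] '' V ∩ U).Nonempty)
    (x : X) : x ∈ extLimitSet T x := by
  rcases iter_eq_or_mem T hT x x (self_cross T hiso halmost x) with ⟨n, hn, hfix⟩ | h
  · have hper : Function.IsPeriodicPt T n x := hfix
    have hnpos : 0 < n := hn
    refine ⟨fun m => (m + 1) * n,
      strictMono_nat_of_lt_succ (fun m => mul_lt_mul_of_pos_right (by omega) hnpos),
      fun m => Nat.mul_pos (by omega) hnpos, fun _ => x, tendsto_const_nhds, ?_⟩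
    exact Tendsto.congr (fun m => ((hper.const_mul (m + 1)) : T^[(m + 1) * n] x = x).symm)
      tendsto_const_nhds
  · exact h

private lemma shift_mem_ext (T : X → X) (hT : Continuous T) {x : X}
    (hxx : x ∈ extLimitSet T x) (n : ℕ) : T^[n] x ∈ extLimitSet T x := by
  obtain ⟨k, hk, hkpos, u, hu, hTu⟩ := hxx
  refine ⟨fun m => n + k m, fun a b hab => Nat.add_lt_add_left (hk hab) n,
    fun m => Nat.lt_of_lt_of_le (hkpos m) (Nat.le_add_left _ _), u, hu, ?_⟩
  exact Tendsto.congr (fun m => (Function.iterate_add_apply T n (k m) (u m)).symm)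
    (((hT.iterate n).tendsto x).comp hTu)

private lemma mem_ext_of_cross (T : X → X) (hT : Continuous T)
    (hiso : ∀ x : X, (𝓝[≠] x).NeBot)
    (halmost : ∀ U V : Set X, IsOpen U → IsOpen V → U.Nonempty → V.Nonempty →
      ∃ n : ℕ, (T^[n] '' U ∩ V).Nonempty ∨ (T^[n] '' V ∩ U).Nonempty)
    (x y : X)
    (h : ∀ ε : ℝ, 0 < ε → ∃ n : ℕ, 1 ≤ n ∧ ∃ p : X,
      dist p x < ε ∧ dist (T^[n] p) y < ε) :
    y ∈ extLimitSet T x := by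
  rcases iter_eq_or_mem T hT x y h with ⟨n, hn, heq⟩ | h'
  · exact heq ▸ shift_mem_ext T hT (self_mem_ext T hT hiso halmost x) n
  · exact h'

private lemma ext_dichotomy (T : X → X) (hT : Continuous T)
    (hiso : ∀ x : X, (𝓝[≠] x).NeBot)
    (halmost : ∀ U V : Set X, IsOpen U → IsOpen V → U.Nonempty → V.Nonempty →
      ∃ n : ℕ, (T^[n] '' U ∩ V).Nonempty ∨ (T^[n] '' V ∩ U).Nonempty)
    (x y : X) : x ∈ extLimitSet T y ∨ y ∈ extLimitSet T x := by
  by_cases hxy : x = y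
  · subst hxy
    exact Or.inl (self_mem_ext T hT hiso halmost x)
  by_cases hH : ∀ ε : ℝ, 0 < ε → ∃ n : ℕ, 1 ≤ n ∧ ∃ p : X,
      dist p y < ε ∧ dist (T^[n] p) x < ε
  · exact Or.inl (mem_ext_of_cross T hT hiso halmost y x hH)
  · push_neg at hH
    obtain ⟨ε₁, hε₁, hH⟩ := hH
    refine Or.inr (mem_ext_of_cross T hT hiso halmost x y ?_)
    intro ε hε
    have hd : 0 < dist x y := dist_pos.mpr hxy
    set r := min ε (min ε₁ (dist x y / 2)) with hrdef
    have hrpos : 0 < r := lt_min hε (lt_min hε₁ (by positivity))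
    have hrε : r ≤ ε := min_le_left _ _
    have hrε₁ : r ≤ ε₁ := (min_le_right _ _).trans (min_le_left _ _)
    have hrd : r ≤ dist x y / 2 := (min_le_right _ _).trans (min_le_right _ _)
    obtain ⟨n, hcase⟩ := halmost (ball x r) (ball y r) isOpen_ball isOpen_ball
      ⟨x, mem_ball_self hrpos⟩ ⟨y, mem_ball_self hrpos⟩
    have hdisj : ∀ z : X, dist z x < r → dist z y < r → False := by
      intro z h1 h2
      have h3 := dist_triangle x z y
      rw [dist_comm x z] at h3
      linarith
    have hn1 : 1 ≤ n := by
      by_contra h0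
      have hn0 : n = 0 := by omega
      subst hn0
      rcases hcase with ⟨z, ⟨p, hp, hpz⟩, hz⟩ | ⟨z, ⟨p, hp, hpz⟩, hz⟩ <;>
        simp only [Function.iterate_zero_apply] at hpz <;> subst hpz
      · exact hdisj _ (mem_ball.mp hp) (mem_ball.mp hz)
      · exact hdisj _ (mem_ball.mp hz) (mem_ball.mp hp)
    rcases hcase with ⟨z, ⟨p, hp, hpz⟩, hz⟩ | ⟨z, ⟨p, hp, hpz⟩, hz⟩
    · refine ⟨n, hn1, p, lt_of_lt_of_le (mem_ball.mp hp) hrε, ?_⟩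
      rw [hpz]
      exact lt_of_lt_of_le (mem_ball.mp hz) hrε
    · exfalso
      have h1 : dist (T^[n] p) x < ε₁ := by
        rw [hpz]; exact lt_of_lt_of_le (mem_ball.mp hz) hrε₁
      have h2 := hH n hn1 p (lt_of_lt_of_le (mem_ball.mp hp) hrε₁)
      linarith

end Aux

theorem stmt17 {X : Type*} [MetricSpace X] [CompleteSpace X]
    (hiso : ∀ x : X, (𝓝[≠] x).NeBot) (T : X → X) (hT : Continuous T)
    (halmost : ∀ U V : Set X, IsOpen U → IsOpen V → U.Nonempty → V.Nonempty →
      ∃ n : ℕ, (T^[n] '' U ∩ V).Nonempty ∨ (T^[n] '' V ∩ U).Nonempty) :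
    (∀ x y : X, x ∈ extLimitSet T y ∨ y ∈ extLimitSet T x) ∧ TopTransitive T := by
  refine ⟨fun x y => ext_dichotomy T hT hiso halmost x y, ?_⟩
  intro U V hU hV hUne hVne
  by_contra hcon
  obtain ⟨x, hx⟩ := hUne
  obtain ⟨y, hy⟩ := hVne
  have hnot : y ∉ extLimitSet T x := by
    rintro ⟨k, hk, hkpos, u, hu, hTu⟩
    have h1 : ∀ᶠ m in atTop, u m ∈ U := hu.eventually_mem (hU.mem_nhds hx)
    have h2 : ∀ᶠ m in atTop, T^[k m] (u m) ∈ V := hTu.eventually_mem (hV.mem_nhds hy)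
    obtain ⟨m, hm1, hm2⟩ := (h1.and h2).exists
    exact hcon ⟨k m, T^[k m] (u m), ⟨u m, hm1, rfl⟩, hm2⟩
  have hxJy : x ∈ extLimitSet T y :=
    (ext_dichotomy T hT hiso halmost x y).resolve_right hnot
  obtain ⟨k, hk, hkpos, u, hu, hTu⟩ := hxJy
  have h1 : ∀ᶠ m in atTop, u m ∈ V := hu.eventually_mem (hV.mem_nhds hy)
  have h2 : ∀ᶠ m in atTop, T^[k m] (u m) ∈ U := hTu.eventually_mem (hU.mem_nhds hx)
  obtain ⟨m, hm1, hm2⟩ := (h1.and h2).exists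
  set v := u m with hv
  set s := k m with hs
  obtain ⟨rU, hrU, hrUsub⟩ := Metric.isOpen_iff.mp hU _ hm2
  obtain ⟨ρ₁, hρ₁, hρ₁'⟩ := Metric.continuousAt_iff.mp (hT.iterate s).continuousAt rU hrU
  obtain ⟨ρ₂, hρ₂, hρ₂sub⟩ := Metric.isOpen_iff.mp hV _ hm1
  obtain ⟨k', hk', hk'pos, u', hu', hTu'⟩ := self_mem_ext T hT hiso halmost v
  have e1 : ∀ᶠ j in atTop, u' j ∈ ball v (min ρ₁ ρ₂) :=
    hu'.eventually_mem (ball_mem_nhds v (lt_min hρ₁ hρ₂))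
  have e2 : ∀ᶠ j in atTop, T^[k' j] (u' j) ∈ ball v ρ₂ :=
    hTu'.eventually_mem (ball_mem_nhds v hρ₂)
  have hle : ∀ j, j ≤ k' j := fun j => Nat.rec (Nat.zero_le _)
    (fun j ih => Nat.succ_le_of_lt (lt_of_le_of_lt ih (hk' (Nat.lt_succ_self j)))) j
  have e3 : ∀ᶠ j in atTop, s < k' j :=
    eventually_atTop.mpr ⟨s + 1, fun j hj => lt_of_lt_of_le (by omega) (hle j)⟩
  obtain ⟨j, ⟨hj1, hj2⟩, hj3⟩ := ((e1.and e2).and e3).exists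
  set p := u' j with hp
  set t := k' j with ht
  have hTs : T^[s] p ∈ U := by
    apply hrUsub
    rw [mem_ball]
    exact hρ₁' (lt_of_lt_of_le (mem_ball.mp hj1) (min_le_left _ _))
  have hTt : T^[t] p ∈ V := hρ₂sub hj2
  have hts : s ≤ t := le_of_lt hj3
  have hiter : T^[t] p = T^[t - s] (T^[s] p) := by
    rw [← Function.iterate_add_apply, Nat.sub_add_cancel hts]
  exact hcon ⟨t - s, T^[t] p, ⟨T^[s] p, hTs, hiter.symm⟩, hTt⟩
end

section
/- Let X be a completely metrizable topological space without isolated points and T : X → X a continuous map such that x ∈ J(x) for every x ∈ X (every point is non-wandering) and for every pair x, y ∈ X, x ∈ J(y) or y ∈ J(x). Then J(x) = X for every x ∈ X, i.e., T is topologically transitive. -/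
open Filter Topology Set Metric

lemma extLimitSet_iff {X : Type*} [MetricSpace X] (T : X → X) (x y : X) :
    y ∈ extLimitSet T x ↔
      ∀ ε > (0:ℝ), ∀ N : ℕ, ∃ n, N ≤ n ∧ 0 < n ∧
        ∃ z, dist z x < ε ∧ dist (T^[n] z) y < ε := by
  constructor
  · rintro ⟨k, hk, hkpos, u, hu, hTu⟩ ε hε N
    obtain ⟨M1, hM1⟩ := Metric.tendsto_atTop.1 hu ε hε
    obtain ⟨M2, hM2⟩ := Metric.tendsto_atTop.1 hTu ε hε
    set m := max (max M1 M2) N with hm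
    refine ⟨k m, le_trans (le_max_right _ _) hk.le_apply, hkpos m, u m,
      hM1 m (le_trans (le_max_left _ _) (le_max_left _ _)),
      hM2 m (le_trans (le_max_right _ _) (le_max_left _ _))⟩
  · intro H
    have H' : ∀ (m : ℕ) (N : ℕ), ∃ p : ℕ × X, N ≤ p.1 ∧ 0 < p.1 ∧
        dist p.2 x < 1/(m+1) ∧ dist (T^[p.1] p.2) y < 1/(m+1) := by
      intro m N
      obtain ⟨n, hn, hn0, z, hz1, hz2⟩ := H (1/(m+1)) (by positivity) N
      exact ⟨(n, z), hn, hn0, hz1, hz2⟩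
    choose F hF1 hF2 hF3 hF4 using H'
    set f : ℕ → ℕ × X := fun m => Nat.rec (F 0 0) (fun m p => F (m+1) (p.1+1)) m with hf
    have hpos : ∀ m, 0 < (f m).1 := by
      intro m
      cases m with
      | zero => exact hF2 0 0
      | succ m => exact hF2 (m+1) _
    have hmono : StrictMono (fun m => (f m).1) := by
      apply strictMono_nat_of_lt_succ
      intro m
      have := hF1 (m+1) ((f m).1 + 1)
      simp only [hf] at this ⊢
      omega
    have hd1 : ∀ m : ℕ, dist (f m).2 x < 1/(m+1) := by
      intro m
      cases m with
      | zero => exact hF3 0 0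
      | succ m => exact hF3 (m+1) _
    have hd2 : ∀ m : ℕ, dist (T^[(f m).1] (f m).2) y < 1/(m+1) := by
      intro m
      cases m with
      | zero => exact hF4 0 0
      | succ m => exact hF4 (m+1) _
    refine ⟨fun m => (f m).1, hmono, hpos, fun m => (f m).2, ?_, ?_⟩
    · refine tendsto_iff_dist_tendsto_zero.2 (squeeze_zero (fun n => dist_nonneg)
        (fun n => (hd1 n).le) tendsto_one_div_add_atTop_nhds_zero_nat)
    · refine tendsto_iff_dist_tendsto_zero.2 (squeeze_zero (fun n => dist_nonneg)
        (fun n => (hd2 n).le) tendsto_one_div_add_atTop_nhds_zero_nat)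

lemma extLimitSet_apply_subset {X : Type*} [MetricSpace X] {T : X → X} (hT : Continuous T)
    {x y : X} (hy : y ∈ extLimitSet T x) : y ∈ extLimitSet T (T x) := by
  obtain ⟨k, hk, hkpos, u, hu, hTu⟩ := hy
  have hk2 : ∀ n, 2 ≤ k (n+1) := fun n => lt_of_le_of_lt (hkpos n) (hk (show n < n+1 by omega))
  refine ⟨fun n => k (n+1) - 1, ?_, ?_, fun n => T (u (n+1)), ?_, ?_⟩
  · intro a b hab
    have h1 := hk (show a+1 < b+1 by omega)
    have h2 := hk2 a
    simp only
    omega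
  · intro n
    have := hk2 n
    simp only
    omega
  · exact (hT.tendsto x).comp (hu.comp (tendsto_add_atTop_nat 1))
  · have heq : ∀ n, T^[k (n+1)] (u (n+1)) = T^[k (n+1) - 1] (T (u (n+1))) := by
      intro n
      rw [← Function.iterate_succ_apply]
      congr 1
      have := hk2 n
      omega
    exact (hTu.comp (tendsto_add_atTop_nat 1)).congr heq

lemma extLimitSet_iterate_subset {X : Type*} [MetricSpace X] {T : X → X} (hT : Continuous T)
    {x y : X} (m : ℕ) (hy : y ∈ extLimitSet T x) : y ∈ extLimitSet T (T^[m] x) := by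
  induction m with
  | zero => simpa using hy
  | succ m ih =>
    rw [Function.iterate_succ_apply']
    exact extLimitSet_apply_subset hT ih

theorem stmt18 {X : Type*} [MetricSpace X] [CompleteSpace X]
    (hiso : ∀ x : X, (𝓝[≠] x).NeBot) (T : X → X) (hT : Continuous T)
    (hnw : ∀ x : X, x ∈ extLimitSet T x)
    (h : ∀ x y : X, x ∈ extLimitSet T y ∨ y ∈ extLimitSet T x) :
    (∀ x : X, extLimitSet T x = Set.univ) ∧ TopTransitive T := by
  have key : ∀ x : X, extLimitSet T x = Set.univ := by
    intro x
    ext y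
    simp only [Set.mem_univ, iff_true]
    by_contra hy
    rcases h x y with hxy | hyx
    swap
    · exact hy hyx
    rw [extLimitSet_iff] at hy
    push_neg at hy
    obtain ⟨ε, hε, N, hsep⟩ := hy
    -- from x ∈ J(y), get w near y with z = T^[m] w near x
    obtain ⟨k, hk, hkpos, u, hu, hTu⟩ := hxy
    obtain ⟨M1, hM1⟩ := Metric.tendsto_atTop.1 hu (ε/2) (by linarith)
    obtain ⟨M2, hM2⟩ := Metric.tendsto_atTop.1 hTu (ε/2) (by linarith)
    set n := max M1 M2 with hn
    set w := u n with hw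
    set z := T^[k n] w with hz
    have hwy : dist w y < ε/2 := hM1 n (le_max_left _ _)
    have hzx : dist z x < ε/2 := hM2 n (le_max_right _ _)
    have hwz : w ∈ extLimitSet T z := extLimitSet_iterate_subset hT (k n) (hnw w)
    have hδ : (0:ℝ) < min (ε - dist z x) (ε - dist w y) :=
      lt_min (by linarith) (by linarith)
    obtain ⟨j, hjN, hj0, v, hvz, hvw⟩ :=
      (extLimitSet_iff T z w).1 hwz (min (ε - dist z x) (ε - dist w y)) hδ N
    have h1 : dist v x < ε := by
      have := dist_triangle v z x
      have := lt_of_lt_of_le hvz (min_le_left _ _)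
      linarith
    have h2 : dist (T^[j] v) y < ε := by
      have := dist_triangle (T^[j] v) w y
      have := lt_of_lt_of_le hvw (min_le_right _ _)
      linarith
    exact absurd h2 (not_lt.2 (hsep j hjN hj0 v h1))
  refine ⟨key, ?_⟩
  rintro U V hU hV ⟨p, hp⟩ ⟨q, hq⟩
  obtain ⟨ε1, hε1, hb1⟩ := Metric.isOpen_iff.1 hU p hp
  obtain ⟨ε2, hε2, hb2⟩ := Metric.isOpen_iff.1 hV q hq
  have hq' : q ∈ extLimitSet T p := by rw [key p]; trivial
  obtain ⟨n, -, -, z, hz1, hz2⟩ :=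
    (extLimitSet_iff T p q).1 hq' (min ε1 ε2) (lt_min hε1 hε2) 0
  exact ⟨n, T^[n] z, ⟨z, hb1 (Metric.mem_ball.2 (hz1.trans_le (min_le_left _ _))), rfl⟩,
    hb2 (Metric.mem_ball.2 (hz2.trans_le (min_le_right _ _)))⟩
end

section
/- Let X be a completely metrizable topological space without isolated points and T : X → X continuous. If every pair of points x, y ∈ X satisfies x ∈ D(y) or y ∈ D(x), where D(z) = O(z, T) ∪ J(z), and moreover for each x ∈ X the orbit O(x, T) has empty interior, then for every x, y ∈ X one has x ∈ J(y) or y ∈ J(x). -/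
open Filter Topology Set Metric

private lemma aux_tendsto {X : Type*} [MetricSpace X] (u : ℕ → X) (y : X)
    (h : ∀ n : ℕ, dist (u n) y < 1 / ((n : ℝ) + 1)) : Tendsto u atTop (𝓝 y) := by
  rw [tendsto_iff_dist_tendsto_zero]
  exact squeeze_zero (fun n => dist_nonneg) (fun n => (h n).le)
    tendsto_one_div_add_atTop_nhds_zero_nat

private lemma mem_ext_of_forall {X : Type*} [MetricSpace X] (T : X → X) (x y : X)
    (hQ : ∀ ε : ℝ, 0 < ε → ∀ N : ℕ, ∃ z : X, ∃ k : ℕ,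
      dist z y < ε ∧ N < k ∧ dist (T^[k] z) x < ε) :
    x ∈ extLimitSet T y := by
  choose Z K hZ hK hTK using fun p : ℕ × ℕ =>
    hQ (1 / ((p.1 : ℝ) + 1)) (by positivity) p.2
  let g : ℕ → ℕ × X := fun n => Nat.rec (⟨K (0, 0), Z (0, 0)⟩)
    (fun m ih => ⟨K (m + 1, ih.1), Z (m + 1, ih.1)⟩) n
  have hg0 : g 0 = ⟨K (0, 0), Z (0, 0)⟩ := rfl
  have hgs : ∀ n, g (n + 1) = ⟨K (n + 1, (g n).1), Z (n + 1, (g n).1)⟩ := fun n => rfl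
  have h1 : ∀ n, dist ((g n).2) y < 1 / ((n : ℝ) + 1) := by
    intro n
    cases n with
    | zero => exact hZ (0, 0)
    | succ m => exact hZ (m + 1, (g m).1)
  have h2 : ∀ n, dist (T^[(g n).1] ((g n).2)) x < 1 / ((n : ℝ) + 1) := by
    intro n
    cases n with
    | zero => exact hTK (0, 0)
    | succ m => exact hTK (m + 1, (g m).1)
  have hmono : StrictMono (fun n => (g n).1) :=
    strictMono_nat_of_lt_succ (fun n => hK (n + 1, (g n).1))
  refine ⟨fun n => (g n).1, hmono, ?_, fun n => (g n).2, aux_tendsto _ _ h1, aux_tendsto _ _ h2⟩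
  intro n
  exact lt_of_lt_of_le (hK (0, 0)) (hmono.monotone (Nat.zero_le n))

private lemma forall_of_mem_ext {X : Type*} [MetricSpace X] (T : X → X) (x y : X)
    (hx : x ∈ extLimitSet T y) :
    ∀ ε : ℝ, 0 < ε → ∀ N : ℕ, ∃ z : X, ∃ k : ℕ,
      dist z y < ε ∧ N < k ∧ dist (T^[k] z) x < ε := by
  obtain ⟨k, hk, hkpos, u, hu, hTu⟩ := hx
  intro ε hε N
  obtain ⟨N₁, h1⟩ := Metric.tendsto_atTop.mp hu ε hε
  obtain ⟨N₂, h2⟩ := Metric.tendsto_atTop.mp hTu ε hε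
  set i := max (max N₁ N₂) (N + 1) with hi
  refine ⟨u i, k i, h1 i (le_max_of_le_left (le_max_left _ _)), ?_,
    h2 i (le_max_of_le_left (le_max_right _ _))⟩
  calc N < N + 1 := Nat.lt_succ_self N
    _ ≤ i := le_max_right _ _
    _ ≤ k i := hk.le_apply

private lemma shift_mem {X : Type*} [MetricSpace X] {T : X → X} (hT : Continuous T)
    {y : X} (hy : y ∈ extLimitSet T y) (n : ℕ) : T^[n] y ∈ extLimitSet T y := by
  obtain ⟨k, hk, hkpos, u, hu, hTu⟩ := hy
  refine ⟨fun i => n + k i, fun a b hab => Nat.add_lt_add_left (hk hab) n,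
    fun i => Nat.lt_of_lt_of_le (hkpos i) (Nat.le_add_left _ _), u, hu, ?_⟩
  have := ((hT.iterate n).tendsto y).comp hTu
  refine this.congr (fun i => ?_)
  simp [Function.iterate_add_apply, Function.comp]

private lemma exists_near_not_orbit {X : Type*} [MetricSpace X] (T : X → X) (y : X)
    (hint : interior (Set.range fun n : ℕ => T^[n] y) = ∅) :
    ∀ δ : ℝ, 0 < δ → ∃ z, dist z y < δ ∧ z ∉ Set.range fun n : ℕ => T^[n] y := by
  intro δ hδ
  by_contra hc
  push_neg at hc
  have hsub : ball y δ ⊆ Set.range fun n : ℕ => T^[n] y :=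
    fun z hz => hc z (mem_ball.mp hz)
  have : y ∈ interior (Set.range fun n : ℕ => T^[n] y) :=
    interior_maximal hsub isOpen_ball (mem_ball_self hδ)
  rw [hint] at this
  exact this

private lemma self_approx {X : Type*} [MetricSpace X] {T : X → X} (hT : Continuous T)
    (h : ∀ x y : X,
      x ∈ (Set.range fun n : ℕ => T^[n] y) ∪ extLimitSet T y ∨
      y ∈ (Set.range fun n : ℕ => T^[n] x) ∪ extLimitSet T x)
    (hint : ∀ x : X, interior (Set.range fun n : ℕ => T^[n] x) = ∅) (y : X) :
    ∀ ε : ℝ, 0 < ε → ∀ N : ℕ, ∃ z : X, ∃ k : ℕ,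
      dist z y < ε ∧ N < k ∧ dist (T^[k] z) y < ε := by
  intro ε hε N
  by_contra hcon
  push_neg at hcon
  -- hcon : ∀ z k, dist z y < ε → N < k → ε ≤ dist (T^[k] z) y
  choose w hw hworb using fun j : ℕ =>
    exists_near_not_orbit T y (hint y) (min (ε / 2) (1 / ((j : ℝ) + 1)))
      (lt_min (by positivity) (by positivity))
  have hwhalf : ∀ j, dist (w j) y < ε / 2 :=
    fun j => lt_of_lt_of_le (hw j) (min_le_left _ _)
  have hwsmall : ∀ j, dist (w j) y < 1 / ((j : ℝ) + 1) :=
    fun j => lt_of_lt_of_le (hw j) (min_le_right _ _)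
  have key : ∀ j, ∃ m, 0 < m ∧ m ≤ N ∧ T^[m] (w j) = y := by
    intro j
    rcases h (w j) y with hc | hc
    · rcases hc with hc | hc
      · exact absurd hc (hworb j)
      · -- w j ∈ extLimitSet T y : produces a witness, contradiction
        obtain ⟨z, k, hz, hk, hTz⟩ :=
          forall_of_mem_ext T (w j) y hc (ε / 2) (by positivity) N
        exfalso
        have h1 : dist (T^[k] z) y < ε := by
          calc dist (T^[k] z) y ≤ dist (T^[k] z) (w j) + dist (w j) y := dist_triangle _ _ _
            _ < ε / 2 + ε / 2 := add_lt_add hTz (hwhalf j)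
            _ = ε := add_halves ε
        exact absurd (hcon z k (hz.trans (half_lt_self hε)) hk) (not_le.mpr h1)
    · rcases hc with hc | hc
      · -- y = T^[m] (w j)
        obtain ⟨m, hm⟩ := hc
        simp only at hm
        have hm0 : 0 < m := by
          rcases Nat.eq_zero_or_pos m with rfl | hpos
          · exfalso
            apply hworb j
            exact ⟨0, by simpa using hm.symm⟩
          · exact hpos
        by_cases hmN : m ≤ N
        · exact ⟨m, hm0, hmN, hm⟩
        · exfalso
          have := hcon (w j) m ((hwhalf j).trans (half_lt_self hε)) (not_le.mp hmN)
          rw [hm, dist_self] at this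
          linarith
      · -- y ∈ extLimitSet T (w j)
        obtain ⟨z, k, hz, hk, hTz⟩ :=
          forall_of_mem_ext T y (w j) hc (ε / 2) (by positivity) N
        exfalso
        have h1 : dist z y < ε := by
          calc dist z y ≤ dist z (w j) + dist (w j) y := dist_triangle _ _ _
            _ < ε / 2 + ε / 2 := add_lt_add hz (hwhalf j)
            _ = ε := add_halves ε
        exact absurd (hcon z k h1 hk) (not_le.mpr (hTz.trans (half_lt_self hε)))
  choose m hm0 hmN hmy using key
  obtain ⟨c, hcinf⟩ := Finite.exists_infinite_fiber
    (fun j => (⟨m j, Nat.lt_succ_of_le (hmN j)⟩ : Fin (N + 1)))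
  have hfib : Set.Infinite ((fun j => (⟨m j, Nat.lt_succ_of_le (hmN j)⟩ : Fin (N + 1))) ⁻¹' {c}) :=
    Set.infinite_coe_iff.mp hcinf
  have hfibval : ∀ j ∈ ((fun j => (⟨m j, Nat.lt_succ_of_le (hmN j)⟩ : Fin (N + 1))) ⁻¹' {c}),
      m j = c.val := by
    intro j hj
    have : (⟨m j, Nat.lt_succ_of_le (hmN j)⟩ : Fin (N + 1)) = c := hj
    exact congrArg Fin.val this
  obtain ⟨j₀, hj₀⟩ := hfib.nonempty
  have hp0 : 0 < c.val := by rw [← hfibval j₀ hj₀]; exact hm0 j₀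
  -- T^[c.val] y = y
  have hper : T^[c.val] y = y := by
    by_contra hne
    have hdpos : 0 < dist (T^[c.val] y) y := dist_pos.mpr hne
    obtain ⟨δ', hδ', hδ'c⟩ := Metric.continuousAt_iff.mp
      ((hT.iterate c.val).continuousAt (x := y)) (dist (T^[c.val] y) y) hdpos
    obtain ⟨J, hJ⟩ := exists_nat_gt (1 / δ')
    obtain ⟨j, hjmem, hjgt⟩ := hfib.exists_gt J
    have hlt : dist (w j) y < δ' := by
      refine (hwsmall j).trans ?_
      rw [div_lt_iff₀ (by positivity)]
      rw [div_lt_iff₀ hδ'] at hJ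
      calc (1 : ℝ) < J * δ' := hJ
        _ ≤ ((j : ℝ) + 1) * δ' := by
            apply mul_le_mul_of_nonneg_right _ hδ'.le
            have : (J : ℝ) ≤ (j : ℝ) := Nat.cast_le.mpr hjgt.le
            linarith
        _ = δ' * ((j : ℝ) + 1) := mul_comm _ _
    have := hδ'c hlt
    have hmj : m j = c.val := hfibval j hjmem
    rw [← hmj, hmy j, dist_comm] at this
    exact absurd this (lt_irrefl _)
  -- final contradiction
  have hfix : Function.IsFixedPt (T^[c.val]) y := hper
  have hiter : T^[c.val * (N + 1)] y = y := by
    rw [Function.iterate_mul]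
    exact hfix.iterate (N + 1)
  have hgt : N < c.val * (N + 1) := by
    calc N < N + 1 := Nat.lt_succ_self N
      _ ≤ c.val * (N + 1) := Nat.le_mul_of_pos_left (N + 1) hp0
  have := hcon y (c.val * (N + 1)) (by rw [dist_self]; exact hε) hgt
  rw [hiter, dist_self] at this
  linarith

theorem stmt19 {X : Type*} [MetricSpace X] [CompleteSpace X]
    (hiso : ∀ x : X, (𝓝[≠] x).NeBot) (T : X → X) (hT : Continuous T)
    (h : ∀ x y : X,
      x ∈ (Set.range fun n : ℕ => T^[n] y) ∪ extLimitSet T y ∨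
      y ∈ (Set.range fun n : ℕ => T^[n] x) ∪ extLimitSet T x)
    (hint : ∀ x : X, interior (Set.range fun n : ℕ => T^[n] x) = ∅) :
    ∀ x y : X, x ∈ extLimitSet T y ∨ y ∈ extLimitSet T x := by
  have self_mem : ∀ y : X, y ∈ extLimitSet T y := fun y =>
    mem_ext_of_forall T y y (self_approx hT h hint y)
  intro x y
  rcases h x y with hc | hc
  · rcases hc with hc | hc
    · obtain ⟨n, hn⟩ := hc
      simp only at hn
      left
      rw [← hn]
      exact shift_mem hT (self_mem y) n
    · exact Or.inl hc
  · rcases hc with hc | hc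
    · obtain ⟨n, hn⟩ := hc
      simp only at hn
      right
      rw [← hn]
      exact shift_mem hT (self_mem x) n
    · exact Or.inr hc
end
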